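/- arXiv:2305.16281 — 8 statements merged into one kernel-verified Lean document; each statement's English description precedes it below -/
import Mathlib

section
/- Let (C, p) be a neutralized Galois category and let π₁(C,p) = Aut(p) be its fundamental group, topologized as a subgroup of the product over all objects X of C of the finite discrete groups Aut(p(X)). Then there is an equivalence of categories between C and the category of finite discrete sets endowed with a continuous left action of π₁(C,p), under which p corresponds (up to natural isomorphism) to the forgetful functor to finite sets. -/
/-!
STATEMENT 2: A neutralized Galois category (C, p) is equivalent to the category of finite
discrete sets with a continuous left action of its fundamental group π₁(C,p) = Aut p
(topologized as a subgroup of ∏_X Aut (p.obj X)), and under this equivalence p corresponds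
to the forgetful functor to finite sets.
-/

open CategoryTheory PreGaloisCategory

universe u v

/-- The category of finite (discrete) sets endowed with a continuous left action of a
topological group `G`. -/
abbrev ContFinAction (G : Type u) [Group G] [TopologicalSpace G] : Type (u + 1) :=
  CategoryTheory.ObjectProperty.FullSubcategory
    (fun X : Action FintypeCat.{u} G =>
      letI : TopologicalSpace X.V := ⊥
      ContinuousSMul G X.V)

/-- The forgetful functor from continuous finite `G`-sets to finite sets. -/
def forgetContFinAction (G : Type u) [Group G] [TopologicalSpace G] :
    ContFinAction G ⥤ FintypeCat.{u} :=
  ObjectProperty.ι _ ⋙ forget₂ (Action FintypeCat.{u} G) FintypeCat.{u}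

theorem stmt_2 {C : Type u} [Category.{v} C] [GaloisCategory C]
    (p : C ⥤ FintypeCat.{u}) [FiberFunctor p] :
    ∃ e : C ≌ ContFinAction (Aut p),
      Nonempty (e.functor ⋙ forgetContFinAction (Aut p) ≅ p) :=
  -- `ContFinAction G` is definitionally `ContAction FintypeCat G` for discrete finite sets.
  ⟨(functorToContAction p).asEquivalence, ⟨Iso.refl _⟩⟩
end

section
/- Let π be a profinite topological group and let U be the forgetful functor from the category of finite discrete sets endowed with a continuous left π-action to the category of finite sets. Then the canonical group homomorphism π → Aut(U), sending g ∈ π to the natural automorphism of U acting by g on each finite π-set, is an isomorphism of topological groups (where Aut(U) carries the topology induced from the product of the discrete groups Aut(U(X)) over all finite continuous π-sets X). -/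
/-!
STATEMENT 3: For a profinite group π, the canonical homomorphism from π to the automorphism
group of the forgetful functor U from finite continuous π-sets to finite sets is an
isomorphism of topological groups (Aut U carrying the topology induced from the product of
the discrete groups Aut (U(X))).
-/

open CategoryTheory PreGaloisCategory

universe u

instance (G : Type u) [Group G] [TopologicalSpace G] (X : ContFinAction G) :
    MulAction G ((forgetContFinAction G).obj X) :=
  inferInstanceAs (MulAction G X.obj.V)

instance (G : Type u) [Group G] [TopologicalSpace G] :
    IsNaturalSMul (forgetContFinAction G) G where
  naturality g {X Y} f x := by
    show f.hom (g • x) = g • f.hom x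
    have h := congrArg (fun φ : X.obj.V ⟶ Y.obj.V => φ x) (f.hom.comm g)
    simp only [FintypeCat.comp_apply] at h
    exact h

/-- The canonical group homomorphism from `G` to the automorphism group of the forgetful
functor from finite continuous `G`-sets to finite sets, sending `g` to the natural
automorphism acting by `g` on each finite continuous `G`-set. -/
noncomputable def canonicalToAut (G : Type u) [Group G] [TopologicalSpace G] :
    G →* Aut (forgetContFinAction G) :=
  toAut (forgetContFinAction G) G

/-!
Continuity is formal: the component of `g` in the discrete group `Aut (U X)` is determined by
the finitely many values `g • x`, each of which depends continuously on `g`.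

The finite quotients `G ⧸ V` by open subgroups `V` are continuous `G`-sets. If `g ≠ 1`, some
open subgroup `V` of the profinite group `G` misses `g`, so `g` moves the coset `V`; hence the map
is injective. Given a natural endomorphism `t` of `U`, the images `c V ∈ G ⧸ V` of the trivial
cosets under `t` are compatible under the projections `G ⧸ V ⟶ G ⧸ W`, so the sets
`{g | g V = c V}` form a directed family of nonempty closed subsets of the compact space `G` and
share a point `g`. Every `x` in a
continuous finite `G`-set `X` is the image of the coset `Stab x` under the orbit map
`G ⧸ Stab x ⟶ X`, and naturality of `t` along it gives `t x = g • x`.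
-/

universe w

section NaturalAction

variable {C : Type*} [Category C] (F : C ⥤ FintypeCat.{w}) (G : Type*) [Group G]
  [TopologicalSpace G] [∀ X, MulAction G (F.obj X)] [IsNaturalSMul F G]

lemma continuous_toAut [∀ X, ContinuousSMul G (F.obj X)] : Continuous (toAut F G) := by
  refine continuous_induced_rng.mpr (continuous_pi fun X => ?_)
  rw [continuous_discrete_rng]
  intro σ
  have hfiber : (fun g => autEmbedding F (toAut F G g) X) ⁻¹' {σ} =
      ⋂ x : F.obj X, {g : G | g • x = σ.hom x} := by
    ext g
    simp only [Set.mem_preimage, Set.mem_singleton_iff, Set.mem_iInter, Set.mem_ofPred_eq]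
    refine ⟨fun hg x => by rw [← hg]; rfl, fun hg => ?_⟩
    exact Iso.ext (FintypeCat.hom_ext _ _ hg)
  change IsOpen ((fun g => autEmbedding F (toAut F G g) X) ⁻¹' {σ})
  rw [hfiber]
  exact isOpen_iInter_of_finite fun x =>
    (continuous_id.smul continuous_const).isOpen_preimage _ (isOpen_discrete {σ.hom x})

end NaturalAction

namespace ContFinAction

variable {G : Type u} [Group G] [TopologicalSpace G]

instance (X : ContFinAction G) : ContinuousSMul G ((forgetContFinAction G).obj X) := X.property

lemma continuous_canonicalToAut : Continuous (canonicalToAut G) := continuous_toAut _ G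

variable [IsTopologicalGroup G]

lemma continuousSMul_quotient (U : OpenSubgroup G) :
    @ContinuousSMul G (G ⧸ U.toSubgroup) _ _ ⊥ := by
  rw [← DiscreteTopology.eq_bot (α := G ⧸ U.toSubgroup)]
  infer_instance

def stabilizer {X : ContFinAction G} (x : (forgetContFinAction G).obj X) : OpenSubgroup G :=
  ⟨MulAction.stabilizer G x, stabilizer_isOpen G x⟩

variable [CompactSpace G]

noncomputable instance (U : OpenSubgroup G) : Fintype (G ⧸ U.toSubgroup) := .ofFinite _

variable (G) in
noncomputable def quotient (U : OpenSubgroup G) : ContFinAction G :=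
  ⟨G ⧸ₐ U.toSubgroup, continuousSMul_quotient U⟩

noncomputable def quotientMap {U V : OpenSubgroup G} (h : U ≤ V) :
    quotient G U ⟶ quotient G V :=
  ObjectProperty.homMk (Action.FintypeCat.quotientToQuotientOfLE V.toSubgroup U.toSubgroup h)

noncomputable def orbitMap {X : ContFinAction G} (x : (forgetContFinAction G).obj X) :
    quotient G (stabilizer x) ⟶ X :=
  ObjectProperty.homMk
    ⟨FintypeCat.homMk (MulAction.ofQuotientStabilizer G x), fun g => by
      ext y
      exact MulAction.ofQuotientStabilizer_smul G x g y⟩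

def quotientBase (U : OpenSubgroup G) : (forgetContFinAction G).obj (quotient G U) :=
  ((1 : G) : G ⧸ U.toSubgroup)

lemma smul_quotientBase_eq_iff {U : OpenSubgroup G} {g : G} :
    g • quotientBase U = quotientBase U ↔ g ∈ U := by
  change ((g * 1 : G) : G ⧸ U.toSubgroup) = ((1 : G) : G ⧸ U.toSubgroup) ↔ _
  rw [QuotientGroup.eq, mul_one, mul_one, inv_mem_iff]
  rfl

lemma eq_one_of_forall_smul_eq [T2Space G] [TotallyDisconnectedSpace G] (g : G)
    (hg : ∀ (X : ContFinAction G) (x : (forgetContFinAction G).obj X), g • x = x) : g = 1 := by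
  by_contra hne
  obtain ⟨N, hN⟩ := ProfiniteGrp.exist_openNormalSubgroup_sub_open_nhds_of_one
    isOpen_compl_singleton (Ne.symm hne)
  exact hN (smul_quotientBase_eq_iff.mp (hg _ (quotientBase N.toOpenSubgroup))) rfl

variable (t : forgetContFinAction G ⟶ forgetContFinAction G)

lemma app_eq_orbitMap_app_quotientBase {X : ContFinAction G} (x : (forgetContFinAction G).obj X) :
    t.app X x = (orbitMap x).hom.hom (t.app _ (quotientBase (stabilizer x))) := by
  calc t.app X x = t.app X ((orbitMap x).hom.hom (quotientBase _)) :=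
        congrArg (t.app X) (one_smul G x).symm
    _ = _ := ConcreteCategory.congr_hom (t.naturality (orbitMap x)) (quotientBase _)

lemma quotientMap_app_quotientBase {U V : OpenSubgroup G} (h : U ≤ V) :
    (quotientMap h).hom.hom (t.app _ (quotientBase U)) = t.app _ (quotientBase V) :=
  (ConcreteCategory.congr_hom (t.naturality (quotientMap h)) (quotientBase U)).symm

lemma exists_forall_mk_eq_app_quotientBase :
    ∃ g : G, ∀ U : OpenSubgroup G, (g : G ⧸ U.toSubgroup) = t.app _ (quotientBase U) := by
  let S (U : OpenSubgroup G) : Set G := QuotientGroup.mk ⁻¹' {t.app _ (quotientBase U)}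
  have hmono {U V : OpenSubgroup G} (h : U ≤ V) : S U ⊆ S V :=
    fun g (hg : (g : G ⧸ U.toSubgroup) = _) =>
      (congrArg (quotientMap h).hom.hom hg).trans (quotientMap_app_quotientBase t h)
  have hclosed (U : OpenSubgroup G) : IsClosed (S U) :=
    (isClosed_discrete _).preimage QuotientGroup.continuous_mk
  obtain ⟨g, hg⟩ := IsCompact.nonempty_iInter_of_directed_nonempty_isCompact_isClosed S
    (fun U V => ⟨U ⊓ V, hmono inf_le_left, hmono inf_le_right⟩)
    (fun U => QuotientGroup.mk_surjective.nonempty_preimage.mpr (Set.singleton_nonempty _))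
    (fun U => (hclosed U).isCompact) hclosed
  exact ⟨g, Set.mem_iInter.mp hg⟩

lemma exists_forall_app_eq_smul :
    ∃ g : G, ∀ (X : ContFinAction G) (x : (forgetContFinAction G).obj X), t.app X x = g • x := by
  obtain ⟨g, hg⟩ := exists_forall_mk_eq_app_quotientBase t
  refine ⟨g, fun X x => ?_⟩
  rw [app_eq_orbitMap_app_quotientBase, ← hg]
  exact MulAction.ofQuotientStabilizer_mk G x g

lemma canonicalToAut_surjective : Function.Surjective (canonicalToAut G) := fun t => by
  obtain ⟨g, hg⟩ := exists_forall_app_eq_smul t.hom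
  exact ⟨g, Iso.ext (by ext X x; exact (hg X x).symm)⟩

end ContFinAction

theorem stmt_3 (G : Type u) [Group G] [TopologicalSpace G] [IsTopologicalGroup G]
    [CompactSpace G] [T2Space G] [TotallyDisconnectedSpace G] :
    Function.Bijective (canonicalToAut G) ∧ IsHomeomorph (canonicalToAut G) := by
  have hbij : Function.Bijective (canonicalToAut G) :=
    ⟨toAut_injective_of_non_trivial _ G ContFinAction.eq_one_of_forall_smul_eq,
      ContFinAction.canonicalToAut_surjective⟩
  exact ⟨hbij, isHomeomorph_iff_continuous_bijective.mpr
    ⟨ContFinAction.continuous_canonicalToAut, hbij⟩⟩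
end

section
/- Let k be a field and A a commutative k-algebra that is finite-dimensional as a k-vector space. Then A is classically separable over k if and only if there exist n ∈ ℕ and finite separable field extensions K₁, …, Kₙ of k such that A is isomorphic, as a k-algebra, to the product K₁ × ⋯ × Kₙ. -/
/-!
Both sides say that `A` is unramified over `k`. Over a field, `K ⊗[k] A` is finite, hence
Artinian, so its Jacobson radical is its nilradical: classical separability means that every
`K ⊗[k] A` is reduced. Unramifiedness is stable under base change, and finite unramified algebras
over a field are reduced. Conversely, a finite reduced algebra over the perfect field `k̄` is a
product of separable extensions of `k̄`, hence unramified, and unramifiedness descends along the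
faithfully flat extension `k̄ / k`. Finally, finite unramified algebras over a field are étale, and
étale algebras over a field are exactly the finite products of finite separable extensions.
-/

open TensorProduct

universe u

/-- A commutative algebra `A` over a field `k` is classically separable if for every field
extension `k ⊆ K` the ring `K ⊗[k] A` has zero Jacobson radical. -/
def ClassicallySeparable (k : Type u) [Field k] (A : Type u) [CommRing A]
    [Algebra k A] : Prop :=
  ∀ (K : Type u) [Field K] [Algebra k K],
    (⊥ : Ideal (K ⊗[k] A)).jacobson = ⊥

theorem IsArtinianRing.jacobson_bot_eq_bot_iff_isReduced {R : Type*} [CommRing R]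
    [IsArtinianRing R] : (⊥ : Ideal R).jacobson = ⊥ ↔ IsReduced R := by
  rw [jacobson_eq_radical]
  exact nilradical_eq_bot_iff

namespace Algebra

variable {K A : Type*} [Field K] [CommRing A] [Algebra K A] [Module.Finite K A]

theorem FormallyUnramified.of_isReduced_of_perfectField [PerfectField K] [IsReduced A] :
    FormallyUnramified K A := by
  have : IsArtinianRing A := .of_finite K A
  let (m : MaximalSpectrum A) : Field (A ⧸ m.asIdeal) := Ideal.Quotient.field m.asIdeal
  have hsep (m : MaximalSpectrum A) : Algebra.IsSeparable K (A ⧸ m.asIdeal) :=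
    have : Module.Finite K (A ⧸ m.asIdeal) := Module.Finite.quotient _ _
    inferInstance
  have : FormallyEtale K A := (FormallyEtale.iff_exists_algEquiv_prod K A).mpr
    ⟨_, inferInstance, _, _, _, (IsArtinianRing.equivPi A).restrictScalars K, hsep⟩
  infer_instance

theorem etale_iff_formallyUnramified_of_field : Etale K A ↔ FormallyUnramified K A :=
  ⟨fun _ ↦ inferInstance, fun _ ↦
    ⟨.of_formallyUnramified_of_field K A, FinitePresentation.of_finiteType.mp inferInstance⟩⟩

end Algebra

theorem classicallySeparable_iff_formallyUnramified (k : Type u) [Field k] (A : Type u)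
    [CommRing A] [Algebra k A] [Module.Finite k A] :
    ClassicallySeparable k A ↔ Algebra.FormallyUnramified k A := by
  constructor
  · intro h
    let k' := AlgebraicClosure k
    have : IsArtinianRing (k' ⊗[k] A) := .of_finite k' _
    have : IsReduced (k' ⊗[k] A) :=
      IsArtinianRing.jacobson_bot_eq_bot_iff_isReduced.mp (h k')
    have : Algebra.FormallyUnramified k' (k' ⊗[k] A) :=
      .of_isReduced_of_perfectField
    exact .of_formallyUnramified_tensorProduct_of_faithfullyFlat k'
  · intro _ L _ _
    have : IsArtinianRing (L ⊗[k] A) := .of_finite L _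
    rw [IsArtinianRing.jacobson_bot_eq_bot_iff_isReduced]
    exact Algebra.FormallyUnramified.isReduced_of_field L _

theorem stmt_4 (k : Type u) [Field k] (A : Type u) [CommRing A] [Algebra k A]
    [FiniteDimensional k A] :
    ClassicallySeparable k A ↔
      ∃ (n : ℕ) (K : Fin n → Type u) (fI : ∀ i, Field (K i)),
        letI := fI
        ∃ aI : ∀ i, Algebra k (K i),
          letI := aI
          (∀ i, FiniteDimensional k (K i)) ∧
          (∀ i, Algebra.IsSeparable k (K i)) ∧
          Nonempty (A ≃ₐ[k] ((i : Fin n) → K i)) := by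
  rw [classicallySeparable_iff_formallyUnramified, ← Algebra.etale_iff_formallyUnramified_of_field,
    Algebra.Etale.iff_exists_algEquiv_prod]
  constructor
  · rintro ⟨I, _, Ai, _, _, e, hAi⟩
    let σ := Finite.equivFin I
    exact ⟨Nat.card I, fun j ↦ Ai (σ.symm j), inferInstance, inferInstance,
      fun j ↦ (hAi _).1, fun j ↦ (hAi _).2, ⟨e.trans (AlgEquiv.piCongrLeft' k Ai σ)⟩⟩
  · rintro ⟨n, K, _, _, hfin, hsep, ⟨e⟩⟩
    exact ⟨ULift (Fin n), inferInstance, fun j ↦ K j.down, inferInstance, inferInstance,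
      e.trans (AlgEquiv.piCongrLeft' k K Equiv.ulift.symm), fun j ↦ ⟨hfin _, hsep _⟩⟩
end

section
/- Let k be a field and let X and Y be profinite topological spaces (compact, Hausdorff, totally disconnected). Then the map sending a continuous function f : Y → X to the k-algebra homomorphism LC(X, k) → LC(Y, k) given by precomposition with f is a bijection between the set of continuous maps Y → X and the set of k-algebra homomorphisms LC(X, k) → LC(Y, k). In particular, the functor sending a profinite space X to the k-algebra of locally constant k-valued functions on X is fully faithful. -/
/-!
A `k`-algebra map `χ : LC(X, k) → k` sends each idempotent `1_U` (`U` clopen) to `0` or `1`.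
The clopens sent to `1` are closed under intersection and nonempty, so by compactness they share
a point `x`, and `χ` is evaluation at `x` because `g * 1_{g = g x} = g x • 1_{g = g x}`.
Applying this to the characters `g ↦ φ g y` yields `f : Y → X`, which is continuous since
`f ⁻¹' U = {y | φ 1_U y = 1}` for clopen `U`; uniqueness holds because clopens separate the
points of `X`.
-/

universe u v

namespace LocallyConstant

section CharFn

variable {X : Type*} [TopologicalSpace X] (Z : Type*)

lemma charFn_inter [MulZeroOneClass Z] {U V : Set X} (hU : IsClopen U) (hV : IsClopen V) :
    charFn Z (hU.inter hV) = charFn Z hU * charFn Z hV :=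
  coe_injective Set.inter_indicator_one

lemma isIdempotentElem_charFn [MulZeroOneClass Z] {U : Set X} (hU : IsClopen U) :
    IsIdempotentElem (charFn Z hU) := by
  ext x
  by_cases hx : x ∈ U <;> simp [coe_charFn, hx]

lemma charFn_univ [MulZeroOneClass Z] : charFn Z (isClopen_univ (X := X)) = 1 :=
  coe_injective (Set.indicator_univ _)

lemma charFn_empty [MulZeroOneClass Z] : charFn Z (isClopen_empty (X := X)) = 0 :=
  coe_injective (Set.indicator_empty _)

lemma charFn_add_charFn_compl [Semiring Z] {U : Set X} (hU : IsClopen U) :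
    charFn Z hU + charFn Z hU.compl = 1 :=
  coe_injective (Set.indicator_self_add_compl U 1)

lemma mul_charFn_fiber [Semiring Z] (g : LocallyConstant X Z) (c : Z) :
    g * charFn Z (g.isLocallyConstant.isClopen_fiber c) =
      c • charFn Z (g.isLocallyConstant.isClopen_fiber c) := by
  ext x
  by_cases hx : g x = c <;> simp [coe_charFn, hx]

end CharFn

section Characters

variable {X : Type*} [TopologicalSpace X] {k : Type*} [CommRing k]
  (χ : LocallyConstant X k →ₐ[k] k)

lemma apply_charFn_eq_zero_or_one [IsDomain k] {U : Set X} (hU : IsClopen U) :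
    χ (charFn k hU) = 0 ∨ χ (charFn k hU) = 1 :=
  IsIdempotentElem.iff_eq_zero_or_one.mp ((isIdempotentElem_charFn k hU).map χ)

lemma apply_charFn_compl {U : Set X} (hU : IsClopen U) :
    χ (charFn k hU.compl) = 1 - χ (charFn k hU) := by
  rw [eq_sub_iff_add_eq', ← map_add, charFn_add_charFn_compl, map_one]

lemma exists_forall_mem_of_apply_charFn_eq_one [Nontrivial k] [CompactSpace X] :
    ∃ x, ∀ (U : Set X) (hU : IsClopen U), χ (charFn k hU) = 1 → x ∈ U := by
  set S : Set (Set X) := {U | ∃ hU : IsClopen U, χ (charFn k hU) = 1}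
  have : Nonempty S := ⟨⟨Set.univ, isClopen_univ, by rw [charFn_univ, map_one]⟩⟩
  have hdir : DirectedOn (· ⊇ ·) S := by
    rintro U ⟨hU, hχU⟩ V ⟨hV, hχV⟩
    exact ⟨U ∩ V, ⟨hU.inter hV, by rw [charFn_inter k hU hV, map_mul, hχU, hχV, one_mul]⟩,
      Set.inter_subset_left, Set.inter_subset_right⟩
  have hne : ∀ U ∈ S, U.Nonempty := by
    rintro U ⟨hU, hχU⟩
    refine Set.nonempty_iff_ne_empty.mpr ?_
    rintro rfl
    rw [charFn_empty, map_zero] at hχU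
    exact zero_ne_one hχU
  obtain ⟨x, hx⟩ := IsCompact.nonempty_sInter_of_directed_nonempty_isCompact_isClosed
    hdir hne (fun U ⟨hU, _⟩ => hU.isClosed.isCompact) (fun U ⟨hU, _⟩ => hU.isClosed)
  exact ⟨x, fun U hU hχU => Set.mem_sInter.mp hx U ⟨hU, hχU⟩⟩

lemma exists_evalₐ_eq [IsDomain k] [CompactSpace X] : ∃ x, evalₐ k x = χ := by
  obtain ⟨x, hx⟩ := exists_forall_mem_of_apply_charFn_eq_one χ
  have hχ_of_mem {U : Set X} (hU : IsClopen U) (hxU : x ∈ U) : χ (charFn k hU) = 1 := by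
    refine (apply_charFn_eq_zero_or_one χ hU).resolve_left fun hχU => ?_
    exact hx Uᶜ hU.compl (by rw [apply_charFn_compl χ hU, hχU, sub_zero]) hxU
  refine ⟨x, AlgHom.ext fun g => ?_⟩
  have hfiber := hχ_of_mem (g.isLocallyConstant.isClopen_fiber (g x)) rfl
  calc g x = χ (g x • charFn k (g.isLocallyConstant.isClopen_fiber (g x))) := by
        rw [map_smul, hfiber, smul_eq_mul, mul_one]
    _ = χ g := by rw [← mul_charFn_fiber, map_mul, hfiber, mul_one]

end Characters

section Eval

variable {X : Type*} [TopologicalSpace X] (R : Type*) {Z : Type*} [CommSemiring R] [Semiring Z]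
  [Algebra R Z] [Nontrivial Z]

lemma evalₐ_injective [TotallySeparatedSpace X] :
    Function.Injective (evalₐ R : X → LocallyConstant X Z →ₐ[R] Z) := by
  intro x y hxy
  by_contra hne
  obtain ⟨U, hU, hxU, hyU⟩ := exists_isClopen_of_totally_separated hne
  have := congrArg (· (charFn Z hU)) hxy
  simp only [evalₐ_apply] at this
  rw [(charFn_eq_one Z x hU).mpr hxU, (charFn_eq_zero Z y hU).mpr hyU] at this
  exact one_ne_zero this

variable {R} {Y : Type*} [TopologicalSpace Y]

lemma continuous_of_evalₐ_eq_comp [CompactSpace X] [T2Space X] [TotallyDisconnectedSpace X]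
    (φ : LocallyConstant X Z →ₐ[R] LocallyConstant Y Z) {f : Y → X}
    (hf : ∀ y, evalₐ R (f y) = (evalₐ R y).comp φ) : Continuous f := by
  refine isTopologicalBasis_isClopen.continuous_iff.mpr fun U hU => ?_
  have : f ⁻¹' U = φ (charFn Z hU) ⁻¹' {1} := by
    ext y
    rw [Set.mem_preimage, ← charFn_eq_one Z _ hU, ← evalₐ_apply R, hf y]
    rfl
  rw [this]
  exact (φ (charFn Z hU)).isLocallyConstant.isOpen_fiber 1

end Eval

end LocallyConstant

open LocallyConstant

theorem stmt_8_general (k : Type u) [Field k]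
    (X Y : Type v) [TopologicalSpace X] [CompactSpace X] [T2Space X]
    [TotallyDisconnectedSpace X] [TopologicalSpace Y] :
    Function.Bijective
      (fun f : C(Y, X) =>
        (LocallyConstant.comapₐ k f :
          LocallyConstant X k →ₐ[k] LocallyConstant Y k)) := by
  constructor
  · intro f g hfg
    ext y
    exact evalₐ_injective k (congrArg (fun φ => (evalₐ k y).comp φ) hfg :)
  · intro φ
    choose f hf using fun y => exists_evalₐ_eq ((evalₐ k y).comp φ)
    refine ⟨⟨f, continuous_of_evalₐ_eq_comp φ hf⟩, AlgHom.ext fun g => ext fun y => ?_⟩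
    exact congrArg (· g) (hf y)

theorem stmt_8 (k : Type u) [Field k]
    (X Y : Type v) [TopologicalSpace X] [CompactSpace X] [T2Space X]
    [TotallyDisconnectedSpace X] [TopologicalSpace Y] [CompactSpace Y] [T2Space Y]
    [TotallyDisconnectedSpace Y] :
    Function.Bijective
      (fun f : C(Y, X) =>
        (LocallyConstant.comapₐ k f :
          LocallyConstant X k →ₐ[k] LocallyConstant Y k)) :=
  stmt_8_general k X Y
end

section
/- Let k be a field and let A and B be commutative k-algebras, each finite-dimensional over k and classically separable over k. Then the tensor product A ⊗_k B is finite-dimensional over k and classically separable over k. -/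
open TensorProduct

universe u

/-!
Over a finite-dimensional algebra the Jacobson radical is the nilradical, so for finite algebras
classical separability says that every base change to a field is reduced. After extending scalars
to `K`, the algebra `K ⊗[k] B` is a finite reduced `K`-algebra, hence a finite product of fields
`Lᵢ`, and `K ⊗[k] (A ⊗[k] B) ≅ (K ⊗[k] A) ⊗[K] (K ⊗[k] B) ≅ ∏ᵢ (K ⊗[k] A) ⊗[K] Lᵢ`. Each factor
is `Lᵢ ⊗[k] A`, reduced by the separability of `A`.
-/

def AllFieldBaseChangesReduced (k : Type u) [Field k] (A : Type u) [CommRing A]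
    [Algebra k A] : Prop :=
  ∀ (K : Type u) [Field K] [Algebra k K], IsReduced (K ⊗[k] A)

theorem classicallySeparable_iff_allFieldBaseChangesReduced {k A : Type u} [Field k]
    [CommRing A] [Algebra k A] [FiniteDimensional k A] :
    ClassicallySeparable k A ↔ AllFieldBaseChangesReduced k A := by
  refine forall_congr' fun K => forall_congr' fun _ => forall_congr' fun _ => ?_
  have : IsArtinianRing (K ⊗[k] A) := isArtinian_of_tower K inferInstance
  exact IsArtinianRing.jacobson_bot_eq_bot_iff_isReduced

theorem AllFieldBaseChangesReduced.baseChange {k A : Type u} [Field k] [CommRing A]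
    [Algebra k A] (hA : AllFieldBaseChangesReduced k A) (K : Type u) [Field K] [Algebra k K] :
    AllFieldBaseChangesReduced K (K ⊗[k] A) := by
  intro E _ _
  let : Algebra k E := ((algebraMap K E).comp (algebraMap k K)).toAlgebra
  have : IsScalarTower k K E := .of_algebraMap_eq' rfl
  have := hA E
  exact isReduced_of_injective _ (Algebra.TensorProduct.cancelBaseChange k K E E A).injective

theorem AllFieldBaseChangesReduced.isReduced_tensorProduct {K C : Type u} [Field K]
    [CommRing C] [Algebra K C] (hC : AllFieldBaseChangesReduced K C) (D : Type u) [CommRing D]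
    [Algebra K D] [Module.Finite K D] [IsReduced D] : IsReduced (C ⊗[K] D) := by
  have : IsArtinianRing D := isArtinian_of_tower K inferInstance
  classical
  have := Fintype.ofFinite (MaximalSpectrum D)
  have hfactor (m : MaximalSpectrum D) : IsReduced (C ⊗[K] (D ⧸ m.asIdeal)) := by
    let : Field (D ⧸ m.asIdeal) := Ideal.Quotient.field _
    have := hC (D ⧸ m.asIdeal)
    exact isReduced_of_injective _ (Algebra.TensorProduct.comm K C (D ⧸ m.asIdeal)).injective
  let e : C ⊗[K] D ≃ₐ[K] ∀ m : MaximalSpectrum D, C ⊗[K] (D ⧸ m.asIdeal) :=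
    (Algebra.TensorProduct.congr .refl ((IsArtinianRing.equivPi D).restrictScalars K)).trans
      (Algebra.TensorProduct.piRight K K C _)
  exact isReduced_of_injective _ e.injective

theorem stmt_13 (k : Type u) [Field k] (A : Type u) [CommRing A] [Algebra k A]
    (B : Type u) [CommRing B] [Algebra k B]
    [FiniteDimensional k A] [FiniteDimensional k B]
    (hA : ClassicallySeparable k A) (hB : ClassicallySeparable k B) :
    FiniteDimensional k (A ⊗[k] B) ∧ ClassicallySeparable k (A ⊗[k] B) := by
  refine ⟨inferInstance, ?_⟩
  rw [classicallySeparable_iff_allFieldBaseChangesReduced] at hA hB ⊢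
  intro K _ _
  have := hB K
  have := (hA.baseChange K).isReduced_tensorProduct (K ⊗[k] B)
  let e : K ⊗[k] (A ⊗[k] B) ≃ₐ[K] (K ⊗[k] A) ⊗[K] (K ⊗[k] B) :=
    (Algebra.TensorProduct.assoc k k K K A B).symm.trans
      (Algebra.TensorProduct.cancelBaseChange k K K (K ⊗[k] A) B).symm
  exact isReduced_of_injective _ e.injective
end

section
/- Let C be a Galois category and let p, p' : C → FinSet be two fibre functors on C. Then p and p' are (non-canonically) naturally isomorphic. -/
/-!
A fibre functor `F` is pro-represented by the pointed Galois objects, so a morphism `F ⟶ G`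
amounts to a compatible family of points in the fibres of `G` over them; such a family exists
because these fibres form a cofiltered system of nonempty finite sets. Every morphism of fibre
functors is surjective on fibres, as automorphisms of a Galois object act transitively on its
fibre. Surjections in both directions between finite fibres are bijections.
-/

open CategoryTheory PreGaloisCategory

universe u v w

namespace CategoryTheory.PreGaloisCategory.FiberFunctor

open Limits PointedGaloisObject

variable {C : Type u} [Category.{v} C] [GaloisCategory C]

-- Pro-representability (`isColimit`) is only available for fibres in the hom universe `v`.
lemma nonempty_hom_of_homUniv (F G : C ⥤ FintypeCat.{v}) [FiberFunctor F] [FiberFunctor G] :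
    Nonempty (F ⟶ G) := by
  let G' := G ⋙ FintypeCat.incl
  have (A : PointedGaloisObject F) : Finite ((incl F ⋙ G' ⋙ uliftFunctor.{u}).obj A) :=
    inferInstanceAs (Finite (ULift (G.obj A)))
  have (A : PointedGaloisObject F) : Nonempty ((incl F ⋙ G' ⋙ uliftFunctor.{u}).obj A) :=
    inferInstanceAs (Nonempty (ULift (G.obj A)))
  obtain ⟨s, hs⟩ := nonempty_sections_of_finite_cofiltered_system (incl F ⋙ G' ⋙ uliftFunctor.{u})
  let e : (F ⋙ FintypeCat.incl ⟶ G') ≃ (incl F ⋙ G' ⋙ uliftFunctor.{u}).sections :=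
    ((colimit.isoColimitCocone ⟨cocone F, isColimit F⟩).homCongr (Iso.refl G')).symm.trans <|
      (colimitCoyonedaHomIsoLimit' (incl F) G').toEquiv.trans (Types.limitEquivSections _)
  exact ⟨((Functor.FullyFaithful.ofFullyFaithful FintypeCat.incl).whiskeringRight C).preimage
    (e.symm ⟨s, hs⟩)⟩

lemma nonempty_hom (F G : C ⥤ FintypeCat.{w}) [FiberFunctor F] [FiberFunctor G] :
    Nonempty (F ⟶ G) := by
  obtain ⟨h⟩ := nonempty_hom_of_homUniv (F ⋙ FintypeCat.uSwitch.{w, v}) (G ⋙ FintypeCat.uSwitch)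
  exact ⟨((Functor.FullyFaithful.ofFullyFaithful FintypeCat.uSwitch).whiskeringRight C).preimage h⟩

variable {F G : C ⥤ FintypeCat.{w}} [FiberFunctor F] [FiberFunctor G]

lemma app_surjective (h : F ⟶ G) (X : C) : Function.Surjective (h.app X) := by
  intro y
  obtain ⟨A, f, b, _, rfl⟩ := exists_hom_from_galois_of_fiber G X y
  obtain ⟨a⟩ := nonempty_fiber_of_isConnected F A
  obtain ⟨σ, hσ⟩ := MulAction.exists_smul_eq (Aut A) (h.app A a) b
  refine ⟨F.map (σ.hom ≫ f) a, ?_⟩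
  rw [FunctorToFintypeCat.naturality F G h, G.map_comp, FintypeCat.comp_apply]
  exact congrArg (G.map f) hσ

instance isIso_app (h : F ⟶ G) (X : C) : IsIso (h.app X) := by
  obtain ⟨h'⟩ := nonempty_hom G F
  refine (ConcreteCategory.isIso_iff_bijective _).2 <|
    (app_surjective h X).bijective_of_nat_card_le ?_
  exact Nat.card_le_card_of_surjective _ (app_surjective h' X)

instance isIso (h : F ⟶ G) : IsIso h :=
  NatIso.isIso_of_isIso_app h

end CategoryTheory.PreGaloisCategory.FiberFunctor

theorem stmt_15 {C : Type u} [Category.{v} C] [GaloisCategory C]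
    (p p' : C ⥤ FintypeCat.{w}) [FiberFunctor p] [FiberFunctor p'] :
    Nonempty (p ≅ p') :=
  (FiberFunctor.nonempty_hom p p').map fun h ↦ asIso h
end

section
/- Let (C, p) be a neutralized Galois category. Then the fundamental group π₁(C,p) = Aut(p), regarded as a subgroup of the product over all objects X of C of the finite discrete groups Aut(p(X)) with the product topology, is a closed subgroup of that product; consequently π₁(C,p) is a profinite topological group (compact, Hausdorff, and totally disconnected). -/
/-!
STATEMENT 16: The fundamental group Aut(p) of a neutralized Galois category (C, p) is a
closed subgroup of the product of the finite discrete groups Aut (p X), and hence is a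
profinite topological group.
-/

open CategoryTheory PreGaloisCategory

universe u v w

theorem stmt_16 {C : Type u} [Category.{v} C] [GaloisCategory C]
    (p : C ⥤ FintypeCat.{w}) [FiberFunctor p] :
    IsClosed (Set.range (autEmbedding p)) ∧
      CompactSpace (Aut p) ∧ T2Space (Aut p) ∧ TotallyDisconnectedSpace (Aut p) := by
  exact ⟨autEmbedding_range_isClosed p, inferInstance, inferInstance, inferInstance⟩
end

section
/- Let k be a field and let X and Y be finite sets. Then the map sending a function u : Y → X to the k-algebra homomorphism (X → k) → (Y → k) given by precomposition with u is a bijection between the set of functions Y → X and the set of k-algebra homomorphisms from the function algebra (X → k) to the function algebra (Y → k). -/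
/-!
A `k`-algebra map `φ : (X → k) → (Y → k)` is determined by its coordinates
`ev_y ∘ φ : (X → k) → k`, and every `k`-algebra map `(X → k) → k` is an evaluation `ev_x`
(`AlgHom.eq_piEvalAlgHom`). So `φ` is precomposition with the map sending `y` to the point
at which `ev_y ∘ φ` evaluates; injectivity holds because
distinct points are separated by the indicator functions `Pi.single x 1`.
-/

universe u v

def compAlgHom (k : Type u) [Field k] {X Y : Type v} (u : Y → X) :
    (X → k) →ₐ[k] (Y → k) where
  toFun f := f ∘ u
  map_one' := rfl
  map_mul' _ _ := rfl
  map_zero' := rfl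
  map_add' _ _ := rfl
  commutes' _ := rfl

theorem Pi.evalAlgHom_injective (k : Type u) [CommSemiring k] [Nontrivial k] (X : Type v) :
    Function.Injective (Pi.evalAlgHom k (fun _ : X => k)) := by
  classical
  intro x x' h
  by_contra hne
  have h1 := AlgHom.congr_fun h (Pi.single x 1)
  simp [Ne.symm hne] at h1

theorem evalAlgHom_comp_compAlgHom (k : Type u) [Field k] {X Y : Type v} (u : Y → X) (y : Y) :
    (Pi.evalAlgHom k (fun _ => k) y).comp (compAlgHom k u) = Pi.evalAlgHom k (fun _ => k) (u y) :=
  rfl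

theorem compAlgHom_injective (k : Type u) [Field k] (X Y : Type v) :
    Function.Injective (fun u : Y → X => compAlgHom k u) := by
  intro u v h
  funext y
  apply Pi.evalAlgHom_injective k X
  rw [← evalAlgHom_comp_compAlgHom, ← evalAlgHom_comp_compAlgHom]
  exact congrArg _ h

theorem compAlgHom_surjective (k : Type u) [Field k] (X Y : Type v) [Finite X] :
    Function.Surjective (fun u : Y → X => compAlgHom k u) := by
  intro φ
  choose u hu using fun y => ((Pi.evalAlgHom k (fun _ => k) y).comp φ).eq_piEvalAlgHom
  exact ⟨u, AlgHom.ext fun f => funext fun y => (AlgHom.congr_fun (hu y) f).symm⟩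

theorem stmt_17_general (k : Type u) [Field k] (X Y : Type v) [Finite X] :
    Function.Bijective (fun u : Y → X => compAlgHom k u) :=
  ⟨compAlgHom_injective k X Y, compAlgHom_surjective k X Y⟩

theorem stmt_17 (k : Type u) [Field k] (X Y : Type v) [Finite X] [Finite Y] :
    Function.Bijective (fun u : Y → X => compAlgHom k u) :=
  stmt_17_general k X Y
end
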